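/- For u, y ∈ R and s ∈ C^{n-1} with y² + ‖s‖² = 1, the curve w_t = (e^u/(1 + y² tanh² t)) · (e^u(1 - y² tanh² t + 2iy tanh t), √2 tanh t (1 + iy tanh t) s) in H satisfies Δ'(w_t, w_t) = 2e^{2u}(1 - tanh² t)/(1 + y² tanh² t) = 8e^{2u}/((1 + y²)(e^{2t} + e^{-2t}) + 2‖s‖²) for all t ∈ R. -/

import Mathlib

/-! Since `Δ'(w, w) = 2 Re w₁ - ‖w₂‖²`, the normalisation `‖s‖² = 1 - y²` makes the two terms
combine to `2 e^{2u} (1 - tanh² t) / (1 + y² tanh² t)`. Multiplying numerator and denominator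
by `cosh² t` turns this into `2 e^{2u} / (cosh² t + y² sinh² t)`, and
`4 (cosh² t + y² sinh² t) = (1 + y²)(e^{2t} + e^{-2t}) + 2 (1 - y²)`. -/

open Complex BigOperators

noncomputable section

/-- The sesqui-polynomial `Δ'(z,w) = z₁ + conj w₁ - ⟨z₂, w₂⟩` on
`H ⊆ ℂ × ℂ^{n-1}`. -/
def DeltaP {m : ℕ} (z w : ℂ × (Fin m → ℂ)) : ℂ :=
  z.1 + (starRingEnd ℂ) w.1 - ∑ i, (starRingEnd ℂ) (w.2 i) * z.2 i

/-- The explicit geodesic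
`w_t = (e^u/(1 + y² tanh² t)) · (e^u (1 - y² tanh² t + 2 i y tanh t),
√2 tanh t (1 + i y tanh t) s)` in `H`. -/
def geoCurve {m : ℕ} (u y : ℝ) (s : Fin m → ℂ) (t : ℝ) : ℂ × (Fin m → ℂ) :=
  (((Real.exp u / (1 + y ^ 2 * Real.tanh t ^ 2) : ℝ) : ℂ) *
      ((Real.exp u : ℂ) *
        (1 - (y : ℂ) ^ 2 * (Real.tanh t : ℂ) ^ 2
          + 2 * Complex.I * (y : ℂ) * (Real.tanh t : ℂ))),
    fun i => ((Real.exp u / (1 + y ^ 2 * Real.tanh t ^ 2) : ℝ) : ℂ) *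
      ((Real.sqrt 2 : ℂ) * (Real.tanh t : ℂ) *
        (1 + Complex.I * (y : ℂ) * (Real.tanh t : ℂ)) * s i))

theorem DeltaP_self {m : ℕ} (z : ℂ × (Fin m → ℂ)) :
    DeltaP z z = ((2 * z.1.re - ∑ i, ‖z.2 i‖ ^ 2 : ℝ) : ℂ) := by
  simp only [DeltaP, add_conj, conj_mul', ← ofReal_pow, ← ofReal_sum, ofReal_sub]

section

variable {m : ℕ} (u y : ℝ) (s : Fin m → ℂ) (t : ℝ)

theorem geoCurve_fst_re :
    (geoCurve u y s t).1.re =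
      Real.exp u ^ 2 * (1 - y ^ 2 * Real.tanh t ^ 2) / (1 + y ^ 2 * Real.tanh t ^ 2) := by
  simp only [geoCurve, ← ofReal_pow, ← ofReal_mul, ← ofReal_ofNat, mul_re, I_re, I_im, ofReal_re,
    ofReal_im, sub_re, add_re, one_re, sub_im, add_im, one_im, mul_im]
  ring

theorem norm_geoCurve_snd_sq (i : Fin m) :
    ‖(geoCurve u y s t).2 i‖ ^ 2 =
      2 * Real.exp u ^ 2 * Real.tanh t ^ 2 / (1 + y ^ 2 * Real.tanh t ^ 2) * ‖s i‖ ^ 2 := by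
  have hnorm : ‖1 + I * (y : ℂ) * (Real.tanh t : ℂ)‖ ^ 2 = 1 + y ^ 2 * Real.tanh t ^ 2 := by
    rw [Complex.sq_norm, normSq_apply]
    simp only [add_re, one_re, mul_re, I_re, I_im, ofReal_re, ofReal_im, add_im, one_im, mul_im]
    ring
  simp only [geoCurve, norm_mul, mul_pow, hnorm, norm_real, Real.norm_eq_abs, sq_abs,
    Real.sq_sqrt zero_le_two]
  field_simp

end

theorem DeltaP_geoCurve_self {m : ℕ} (u y : ℝ) (s : Fin m → ℂ) (t : ℝ)
    (hys : y ^ 2 + ∑ i, ‖s i‖ ^ 2 = 1) :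
    DeltaP (geoCurve u y s t) (geoCurve u y s t) =
      ((2 * Real.exp (2 * u) * (1 - Real.tanh t ^ 2) /
        (1 + y ^ 2 * Real.tanh t ^ 2) : ℝ) : ℂ) := by
  have hs : ∑ i, ‖s i‖ ^ 2 = 1 - y ^ 2 := by linarith
  rw [DeltaP_self, geoCurve_fst_re]
  simp only [norm_geoCurve_snd_sq, ← Finset.mul_sum, hs]
  rw [show 2 * u = u + u by ring, Real.exp_add]
  congr 1
  field_simp
  ring

theorem one_sub_tanh_sq_div_one_add_mul_tanh_sq (y t : ℝ) :
    (1 - Real.tanh t ^ 2) / (1 + y ^ 2 * Real.tanh t ^ 2) =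
      4 / ((1 + y ^ 2) * (Real.exp (2 * t) + Real.exp (-(2 * t))) + 2 * (1 - y ^ 2)) := by
  have hden : (1 + y ^ 2) * (Real.exp (2 * t) + Real.exp (-(2 * t))) + 2 * (1 - y ^ 2) =
      4 * (Real.cosh t ^ 2 + y ^ 2 * Real.sinh t ^ 2) := by
    rw [show Real.exp (2 * t) + Real.exp (-(2 * t)) = 2 * Real.cosh (2 * t) by
      rw [Real.cosh_eq]; ring, Real.cosh_two_mul]
    linear_combination (2 * y ^ 2 - 2) * Real.cosh_sq t
  rw [hden, Real.tanh_eq_sinh_div_cosh]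
  field_simp
  linear_combination Real.cosh_sq t

/-- For `u, y ∈ ℝ` and `s ∈ ℂ^{n-1}` with `y² + ‖s‖² = 1`, the
above curve satisfies
`Δ'(w_t, w_t) = 2 e^{2u} (1 - tanh² t)/(1 + y² tanh² t)
             = 8 e^{2u} / ((1 + y²)(e^{2t} + e^{-2t}) + 2‖s‖²)` for all `t`. -/
theorem stmt13 (m : ℕ) (u y : ℝ) (s : Fin m → ℂ)
    (hys : y ^ 2 + ∑ i, ‖s i‖ ^ 2 = 1) (t : ℝ) :
    DeltaP (geoCurve u y s t) (geoCurve u y s t) =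
      ((2 * Real.exp (2 * u) * (1 - Real.tanh t ^ 2) /
        (1 + y ^ 2 * Real.tanh t ^ 2) : ℝ) : ℂ) ∧
    DeltaP (geoCurve u y s t) (geoCurve u y s t) =
      ((8 * Real.exp (2 * u) /
        ((1 + y ^ 2) * (Real.exp (2 * t) + Real.exp (-(2 * t)))
          + 2 * ∑ i, ‖s i‖ ^ 2) : ℝ) : ℂ) := by
  have hs : ∑ i, ‖s i‖ ^ 2 = 1 - y ^ 2 := by linarith
  refine ⟨DeltaP_geoCurve_self u y s t hys, ?_⟩
  rw [DeltaP_geoCurve_self u y s t hys, mul_div_assoc,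
    one_sub_tanh_sq_div_one_add_mul_tanh_sq, hs]
  congr 1
  ring
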